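/- Let N : ℕ be even with 0 < N, let c₁ : ℝ with k := 2·N·c₁ ∈ ℤ, and let f ∈ ℤ and ℓ ∈ {0,…,N−1}. Define F_N ∈ ℂ^{N×N} by [F_N]_{m,n} = (1/√N)·exp(-2πi·m·n/N), the diagonal chirp matrix Λ_{c₁} with [Λ_{c₁}]_{n,n} = exp(-2πi·c₁·n²), the diagonal Doppler matrix W^f with [W^f]_{n,n} = exp(-2πi·f·n/N), and the cyclic delay matrix L^ℓ with [L^ℓ]_{n,n'} = 1 if n' ≡ n − ℓ (mod N) and 0 otherwise. Then the single-path AFDM effective channel G = F_N·Λ_{c₁}·W^f·L^ℓ·Λ_{c₁}ᴴ·F_Nᴴ satisfies: [G]_{m,m'} ≠ 0 if and only if m' ≡ m + f + k·ℓ (mod N), and every nonzero entry of G has modulus 1; in particular each row and each column of G contains exactly one nonzero entry. -/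

import Mathlib

/-!
Since `2Nc₁ = k ∈ ℤ` and `N` is even, `x ↦ exp(2πi c₁ x²)` is `N`-periodic on `ℤ`, so the cyclic
delay acts on the chirped DFT columns as a plain shift `n ↦ n - ℓ`. Expanding
`c₁(n - ℓ)² = c₁n² - knℓ/N + c₁ℓ²`, the `n`-th summand of `[G]_{m,m'}` becomes
`(1/N)·exp(2πi θ)·exp(2πi n(m' - m - f - kℓ)/N)` with `θ` independent of `n`, and the sum over `n`
is `exp(2πi θ)` or `0` according as `N ∣ m' - m - f - kℓ`.
-/

open Matrix Complex

/-- The `N`-point DFT matrix `F_N` with entries `(1/√N)·exp(-2πi·m·n/N)`. -/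
noncomputable def dftMatrix (N : ℕ) : Matrix (Fin N) (Fin N) ℂ :=
  fun m n => (1 / Real.sqrt N : ℂ) *
    Complex.exp (-2 * Real.pi * Complex.I * (m : ℕ) * (n : ℕ) / N)

/-- The diagonal chirp matrix `Λ_c` with diagonal entries `exp(-2πi·c·n²)`. -/
noncomputable def chirpMatrix (N : ℕ) (c : ℝ) : Matrix (Fin N) (Fin N) ℂ :=
  Matrix.diagonal fun n => Complex.exp (-2 * Real.pi * Complex.I * c * (n : ℕ) ^ 2)

/-- The diagonal Doppler matrix `W^f` with diagonal entries `exp(-2πi·f·n/N)`. -/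
noncomputable def dopplerMatrix (N : ℕ) (f : ℤ) : Matrix (Fin N) (Fin N) ℂ :=
  Matrix.diagonal fun n => Complex.exp (-2 * Real.pi * Complex.I * (f : ℂ) * (n : ℕ) / N)

/-- The cyclic delay matrix `L^ℓ` with `[L^ℓ]_{n,n'} = 1` iff `n' ≡ n − ℓ (mod N)`. -/
def delayMatrix (N : ℕ) (ℓ : ℕ) : Matrix (Fin N) (Fin N) ℂ :=
  fun n n' => if Int.ModEq (N : ℤ) (n' : ℤ) ((n : ℤ) - (ℓ : ℤ)) then 1 else 0

open Real

noncomputable def expTwoPiI (x : ℝ) : ℂ := Complex.exp (2 * π * I * x)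

lemma expTwoPiI_add (x y : ℝ) : expTwoPiI (x + y) = expTwoPiI x * expTwoPiI y := by
  rw [expTwoPiI, expTwoPiI, expTwoPiI, ← Complex.exp_add]; push_cast; ring_nf

lemma expTwoPiI_eq_one_iff {x : ℝ} : expTwoPiI x = 1 ↔ ∃ z : ℤ, x = z := by
  have h2πI : 2 * (π : ℂ) * I ≠ 0 := by simp [Real.pi_ne_zero]
  rw [expTwoPiI, Complex.exp_eq_one_iff]
  refine exists_congr fun z => ?_
  rw [mul_comm _ (x : ℂ), mul_left_inj' h2πI]
  exact_mod_cast Iff.rfl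

lemma expTwoPiI_intCast (z : ℤ) : expTwoPiI z = 1 :=
  expTwoPiI_eq_one_iff.2 ⟨z, rfl⟩

lemma expTwoPiI_add_intCast (x : ℝ) (z : ℤ) : expTwoPiI (x + z) = expTwoPiI x := by
  rw [expTwoPiI_add, expTwoPiI_intCast, mul_one]

lemma norm_expTwoPiI (x : ℝ) : ‖expTwoPiI x‖ = 1 := by
  rw [expTwoPiI, show 2 * (π : ℂ) * I * x = (2 * π * x : ℝ) * I by push_cast; ring,
    Complex.norm_exp_ofReal_mul_I]

lemma star_expTwoPiI (x : ℝ) : star (expTwoPiI x) = expTwoPiI (-x) := by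
  rw [expTwoPiI, expTwoPiI, Complex.star_def, ← Complex.exp_conj]
  simp only [map_mul, Complex.conj_I, Complex.conj_ofReal, map_ofNat, Complex.ofReal_neg]
  ring_nf

lemma expTwoPiI_nat_mul (n : ℕ) (x : ℝ) : expTwoPiI (n * x) = expTwoPiI x ^ n := by
  rw [expTwoPiI, expTwoPiI, ← Complex.exp_nat_mul]; push_cast; ring_nf

lemma sum_expTwoPiI_mul_div {N : ℕ} [NeZero N] (d : ℤ) :
    ∑ n : Fin N, expTwoPiI (n * (d / N)) = if (N : ℤ) ∣ d then (N : ℂ) else 0 := by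
  have hN : (N : ℝ) ≠ 0 := NeZero.ne _
  simp_rw [expTwoPiI_nat_mul]
  rw [Fin.sum_univ_eq_sum_range (expTwoPiI (d / N) ^ ·)]
  have hz_iff : expTwoPiI (d / N) = 1 ↔ (N : ℤ) ∣ d := by
    rw [expTwoPiI_eq_one_iff]
    refine exists_congr fun z => ?_
    rw [div_eq_iff hN, mul_comm]
    exact_mod_cast Iff.rfl
  split_ifs with hd
  · simp [hz_iff.2 hd]
  · have hzN : expTwoPiI (d / N) ^ N = 1 := by
      rw [← expTwoPiI_nat_mul, mul_div_cancel₀ _ hN, expTwoPiI_intCast]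
    rw [geom_sum_eq (mt hz_iff.1 hd), hzN, sub_self, zero_div]

lemma Fin.existsUnique_intCast_modEq {N : ℕ} [NeZero N] (r : ℤ) :
    ∃! a : Fin N, (a : ℤ) ≡ r [ZMOD N] := by
  let w : Fin N := ⟨r.natMod N, Int.natMod_lt (NeZero.ne N)⟩
  have hw : (w : ℤ) ≡ r [ZMOD N] := by
    show ((r % N).toNat : ℤ) % N = r % N
    rw [Int.toNat_of_nonneg (Int.emod_nonneg r (mod_cast NeZero.ne N)), Int.emod_emod]
  exact ⟨w, hw, fun a ha => Fin.ext <|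
    (Int.natCast_modEq_iff.1 (ha.trans hw.symm)).eq_of_lt_of_lt a.isLt w.isLt⟩

lemma Function.Periodic.eq_of_intModEq {α : Type*} {g : ℤ → α} {n a b : ℤ}
    (hg : Function.Periodic g n) (h : a ≡ b [ZMOD n]) : g a = g b := by
  obtain ⟨t, rfl⟩ := Int.modEq_iff_add_fac.1 h
  rw [mul_comm]
  exact ((hg.int_mul t) a).symm

lemma delayMatrix_mulVec {N : ℕ} [NeZero N] (ℓ : ℕ) {g : ℤ → ℂ}
    (hg : Function.Periodic g N) (n : Fin N) :
    (delayMatrix N ℓ *ᵥ fun n' => g n') n = g (n - ℓ) := by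
  obtain ⟨a, ha, ha_unique⟩ := Fin.existsUnique_intCast_modEq (N := N) (n - ℓ)
  have hdelay : ∀ n', delayMatrix N ℓ n n' = if n' = a then 1 else 0 := fun n' => by
    refine if_congr ⟨ha_unique n', ?_⟩ rfl rfl
    rintro rfl; exact ha
  simp [mulVec, dotProduct, hdelay, hg.eq_of_intModEq ha]

lemma expTwoPiI_mul_sq_periodic {N : ℕ} (hN : Even N) {c : ℝ} {k : ℤ} (hk : 2 * N * c = k) :
    Function.Periodic (fun x : ℤ => expTwoPiI (c * x ^ 2)) N := by
  obtain ⟨M, rfl⟩ := hN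
  intro x
  dsimp only
  rw [← expTwoPiI_add_intCast (c * x ^ 2) (k * x + k * M)]
  congr 1
  push_cast at hk ⊢
  linear_combination (x + M : ℝ) * hk

lemma expTwoPiI_mul_div_periodic {N : ℕ} [NeZero N] (a : ℤ) :
    Function.Periodic (fun x : ℤ => expTwoPiI (a * x / N)) N := by
  intro x
  dsimp only
  rw [← expTwoPiI_add_intCast (a * x / N) a]
  congr 1
  push_cast
  field_simp [NeZero.ne (N : ℝ)]

lemma dftMatrix_apply (N : ℕ) (m n : Fin N) :
    dftMatrix N m n = (1 / √N : ℂ) * expTwoPiI (-((m : ℕ) * (n : ℕ) / N)) := by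
  rw [dftMatrix, expTwoPiI]; push_cast; ring_nf

lemma chirpMatrix_eq (N : ℕ) (c : ℝ) :
    chirpMatrix N c = diagonal fun n : Fin N => expTwoPiI (-(c * (n : ℕ) ^ 2)) := by
  rw [chirpMatrix]; congr 1; funext n; rw [expTwoPiI]; push_cast; ring_nf

lemma dopplerMatrix_eq (N : ℕ) (f : ℤ) :
    dopplerMatrix N f = diagonal fun n : Fin N => expTwoPiI (-(f * (n : ℕ) / N)) := by
  rw [dopplerMatrix]; congr 1; funext n; rw [expTwoPiI]; push_cast; ring_nf

noncomputable def afdmChannel (N : ℕ) (c : ℝ) (f : ℤ) (ℓ : ℕ) : Matrix (Fin N) (Fin N) ℂ :=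
  dftMatrix N * chirpMatrix N c * dopplerMatrix N f * delayMatrix N ℓ *
    (chirpMatrix N c)ᴴ * (dftMatrix N)ᴴ

lemma afdmChannel_apply_eq_sum (N : ℕ) (c : ℝ) (f : ℤ) (ℓ : ℕ) (m m' : Fin N) :
    afdmChannel N c f ℓ m m' =
      ∑ n, dftMatrix N m n * expTwoPiI (-(c * (n : ℕ) ^ 2)) * expTwoPiI (-(f * (n : ℕ) / N)) *
        (delayMatrix N ℓ *ᵥ fun n' =>
          star (expTwoPiI (-(c * (n' : ℕ) ^ 2))) * star (dftMatrix N m' n')) n := by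
  simp only [afdmChannel, chirpMatrix_eq, dopplerMatrix_eq, diagonal_conjTranspose, Matrix.mul_assoc]
  simp only [Matrix.mul_apply, diagonal_apply, ite_mul, zero_mul, Finset.sum_ite_eq,
    Finset.mem_univ, if_true, mulVec, dotProduct, Pi.star_apply, conjTranspose_apply, mul_assoc]

lemma chirp_phase_eq {N c k : ℝ} (hN : N ≠ 0) (hk : 2 * N * c = k) (m m' f n ℓ : ℝ) :
    -(m * n / N) + -(c * n ^ 2) + -(f * n / N) + (c * (n - ℓ) ^ 2 + m' * (n - ℓ) / N) =
      (c * ℓ ^ 2 - m' * ℓ / N) + n * ((m' - (m + f + k * ℓ)) / N) := by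
  subst hk
  field_simp
  ring

lemma afdmChannel_apply {N : ℕ} [NeZero N] (hN : Even N) {c : ℝ} {k : ℤ} (hk : 2 * N * c = k)
    (f : ℤ) (ℓ : ℕ) (m m' : Fin N) :
    afdmChannel N c f ℓ m m' =
      if (m' : ℤ) ≡ m + f + k * ℓ [ZMOD N] then expTwoPiI (c * ℓ ^ 2 - (m' : ℕ) * ℓ / N)
      else 0 := by
  set d : ℤ := m' - (m + f + k * ℓ)
  set θ : ℝ := c * ℓ ^ 2 - (m' : ℕ) * ℓ / N
  -- column `m'` of `Λᴴ Fᴴ`, extended to `ℤ`; it is `N`-periodic because `2Nc ∈ ℤ` and `N` is even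
  let g : ℤ → ℂ := fun x => (1 / √N : ℂ) • (expTwoPiI (c * x ^ 2) * expTwoPiI ((m' : ℤ) * x / N))
  have hg : Function.Periodic g N :=
    ((expTwoPiI_mul_sq_periodic hN hk).mul (expTwoPiI_mul_div_periodic _)).smul (1 / √N : ℂ)
  have hs : (1 / √N : ℂ) * (1 / √N) = 1 / N := by
    rw [div_mul_div_comm, one_mul, ← Complex.ofReal_mul, Real.mul_self_sqrt (Nat.cast_nonneg N),
      Complex.ofReal_natCast]
  have hv : (fun n' : Fin N => star (expTwoPiI (-(c * (n' : ℕ) ^ 2))) * star (dftMatrix N m' n')) =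
      fun n' : Fin N => g n' := by
    funext n'
    simp only [g, smul_eq_mul, dftMatrix_apply, star_mul', star_expTwoPiI, neg_neg]
    rw [show star (1 / (√N : ℂ)) = 1 / √N by simp]
    push_cast
    ring
  have hterm : ∀ n : Fin N, dftMatrix N m n * expTwoPiI (-(c * (n : ℕ) ^ 2)) *
      expTwoPiI (-(f * (n : ℕ) / N)) * g (n - ℓ) = 1 / N * expTwoPiI (θ + n * (d / N)) := by
    intro n
    have hphase := chirp_phase_eq (N := N) (NeZero.ne _) hk m m' f n ℓ
    simp only [g, smul_eq_mul, dftMatrix_apply, θ, d]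
    push_cast
    rw [← hphase, ← hs]
    simp only [expTwoPiI_add]
    ring
  rw [afdmChannel_apply_eq_sum, hv]
  simp_rw [delayMatrix_mulVec ℓ hg, hterm, expTwoPiI_add _ (_ * _), ← Finset.mul_sum,
    sum_expTwoPiI_mul_div, Int.modEq_comm, Int.modEq_iff_dvd]
  split_ifs
  · field_simp [NeZero.ne (N : ℂ)]
  · simp

theorem afdm_single_path_effective_channel_general (N : ℕ) (hN : 0 < N) (hNeven : Even N)
    (c₁ : ℝ) (k : ℤ) (hk : (2 * N * c₁ : ℝ) = k) (f : ℤ) (ℓ : ℕ) :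
    let G : Matrix (Fin N) (Fin N) ℂ :=
      dftMatrix N * chirpMatrix N c₁ * dopplerMatrix N f * delayMatrix N ℓ *
        (chirpMatrix N c₁)ᴴ * (dftMatrix N)ᴴ
    (∀ m m' : Fin N,
      G m m' ≠ 0 ↔ Int.ModEq (N : ℤ) (m' : ℤ) ((m : ℤ) + f + k * ℓ)) ∧
    (∀ m m' : Fin N, G m m' ≠ 0 → ‖G m m'‖ = 1) ∧
    (∀ m : Fin N, ∃! m' : Fin N, G m m' ≠ 0) ∧
    (∀ m' : Fin N, ∃! m : Fin N, G m m' ≠ 0) := by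
  intro G
  have : NeZero N := ⟨hN.ne'⟩
  have hG : ∀ m m', G m m' = _ := afdmChannel_apply hNeven hk f ℓ
  have hsupp : ∀ m m' : Fin N, G m m' ≠ 0 ↔ (m' : ℤ) ≡ m + f + k * ℓ [ZMOD N] := fun m m' => by
    rw [hG]
    split_ifs with h <;> simp [h, expTwoPiI, Complex.exp_ne_zero]
  have hsupp_col : ∀ m m' : Fin N, G m m' ≠ 0 ↔ (m : ℤ) ≡ m' - (f + k * ℓ) [ZMOD N] :=
    fun m m' => by
      rw [hsupp, Int.modEq_comm, Int.modEq_iff_dvd, Int.modEq_iff_dvd]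
      ring_nf
  refine ⟨hsupp, fun m m' hne => ?_, fun m => ?_, fun m' => ?_⟩
  · rw [hG] at hne ⊢
    split_ifs at hne ⊢
    · exact norm_expTwoPiI _
    · exact (hne rfl).elim
  · simpa only [hsupp] using Fin.existsUnique_intCast_modEq (m + f + k * ℓ)
  · simpa only [hsupp_col] using Fin.existsUnique_intCast_modEq (m' - (f + k * ℓ))

/-- **Single-path AFDM effective channel structure**: for even `N` and `k = 2Nc₁ ∈ ℤ`,
the single-path effective channel `G = F_N·Λ_{c₁}·W^f·L^ℓ·Λ_{c₁}ᴴ·F_Nᴴ` has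
`[G]_{m,m'} ≠ 0` iff `m' ≡ m + f + k·ℓ (mod N)`, every nonzero entry has modulus `1`,
and each row and each column contains exactly one nonzero entry. -/
theorem afdm_single_path_effective_channel (N : ℕ) (hN : 0 < N) (hNeven : Even N)
    (c₁ : ℝ) (k : ℤ) (hk : (2 * N * c₁ : ℝ) = k) (f : ℤ) (ℓ : ℕ) (hℓ : ℓ < N) :
    let G : Matrix (Fin N) (Fin N) ℂ :=
      dftMatrix N * chirpMatrix N c₁ * dopplerMatrix N f * delayMatrix N ℓ *
        (chirpMatrix N c₁)ᴴ * (dftMatrix N)ᴴ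
    (∀ m m' : Fin N,
      G m m' ≠ 0 ↔ Int.ModEq (N : ℤ) (m' : ℤ) ((m : ℤ) + f + k * ℓ)) ∧
    (∀ m m' : Fin N, G m m' ≠ 0 → ‖G m m'‖ = 1) ∧
    (∀ m : Fin N, ∃! m' : Fin N, G m m' ≠ 0) ∧
    (∀ m' : Fin N, ∃! m : Fin N, G m m' ≠ 0) :=
  afdm_single_path_effective_channel_general N hN hNeven c₁ k hk f ℓ
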